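/- arXiv:2508.01373 — 4 statements merged into one kernel-verified Lean document; each statement's English description precedes it below -/
import Mathlib

section
/- Let G be a finite undirected graph with normalized Laplacian second-smallest eigenvalue λ₂, and let S be a subset of vertices. Then the number of boundary edges satisfies |∂(S)| ≥ λ₂ · vol(S) · (1 − vol(S)/vol(G)), where ∂(S) is the set of edges with exactly one endpoint in S and vol(S) is the sum of degrees of vertices in S. -/
open Finset

/-- Normalized Laplacian `L = I − D^{-1/2} A D^{-1/2}` of a finite simple graph,
with the convention that the `D^{-1/2}` entry of an isolated vertex is `0`. -/
noncomputable def normLap {V : Type*} [Fintype V] [DecidableEq V]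
    (G : SimpleGraph V) [DecidableRel G.Adj] : Matrix V V ℝ :=
  let Dh : Matrix V V ℝ :=
    Matrix.diagonal fun v => if G.degree v = 0 then 0 else (Real.sqrt (G.degree v))⁻¹
  1 - Dh * G.adjMatrix ℝ * Dh

/-- The second smallest eigenvalue (with multiplicity) of a Hermitian real matrix. -/
noncomputable def secondEig {V : Type*} [Fintype V] [DecidableEq V]
    (M : Matrix V V ℝ) (hM : M.IsHermitian) : ℝ :=
  ((Finset.univ.val.map hM.eigenvalues).sort (· ≤ ·)).getD 1 0

/-!
Test the Rayleigh quotient of `L` on `x = D^{1/2} (1_S - σ)` with `σ = vol S / vol G`.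
The vector `D^{1/2} 1` lies in the kernel of `L`, and `σ` is chosen so that `x ⊥ D^{1/2} 1`;
as at most one eigenvalue of `L` lies below `λ₂`, this gives `λ₂ ‖x‖² ≤ ⟨x, L x⟩`.
Conjugating by `D^{1/2}` turns `L` into the combinatorial Laplacian `D - A`, so
`⟨x, L x⟩ = ∑_{uv ∈ E} (1_S u - 1_S v)² = |∂S|`, while `‖x‖² = vol S (1 - σ)`.
-/

open Matrix

theorem List.Pairwise.length_filter_lt_getD_one_le_one {α : Type*} [LinearOrder α]
    {l : List α} (hl : l.Pairwise (· ≤ ·)) (d : α) :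
    (l.filter (· < l.getD 1 d)).length ≤ 1 := by
  match l, hl with
  | [], _ => simp
  | [_], _ => exact (List.length_filter_le _ _).trans (by simp)
  | a :: b :: t, hl =>
    have hbt : (b :: t).filter (· < b) = [] := by
      refine List.filter_eq_nil_iff.mpr fun e he => ?_
      rcases List.mem_cons.mp he with rfl | het
      · simp
      · simpa using (List.pairwise_cons.mp (List.pairwise_cons.mp hl).2).1 e het
    simp only [List.getD_cons_succ, List.getD_cons_zero, List.filter_cons, hbt]
    split <;> simp

namespace Matrix.IsHermitian

variable {n : Type*} [Fintype n] [DecidableEq n] {M : Matrix n n ℝ} (hM : M.IsHermitian)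

theorem dotProduct_eq_sum_eigenvectorBasis (a b : n → ℝ) :
    a ⬝ᵥ b = ∑ i, (⇑(hM.eigenvectorBasis i) ⬝ᵥ a) * (⇑(hM.eigenvectorBasis i) ⬝ᵥ b) := by
  have h := hM.eigenvectorBasis.sum_inner_mul_inner (WithLp.toLp 2 a) (WithLp.toLp 2 b)
  simp only [EuclideanSpace.inner_eq_star_dotProduct, star_trivial] at h
  rw [dotProduct_comm, ← h]
  exact sum_congr rfl fun i _ => by rw [dotProduct_comm b]

theorem eigenvectorBasis_dotProduct_mulVec (i : n) (y : n → ℝ) :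
    ⇑(hM.eigenvectorBasis i) ⬝ᵥ (M *ᵥ y) = hM.eigenvalues i * (⇑(hM.eigenvectorBasis i) ⬝ᵥ y) := by
  have hMT : Mᵀ = M := by simpa using hM.eq
  rw [dotProduct_mulVec, ← mulVec_transpose, hMT, mulVec_eigenvectorBasis, smul_dotProduct,
    smul_eq_mul]

theorem dotProduct_mulVec_eq_sum_eigenvalues (x : n → ℝ) :
    x ⬝ᵥ (M *ᵥ x) = ∑ i, hM.eigenvalues i * (⇑(hM.eigenvectorBasis i) ⬝ᵥ x) ^ 2 := by
  rw [hM.dotProduct_eq_sum_eigenvectorBasis]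
  exact sum_congr rfl fun i _ => by rw [eigenvectorBasis_dotProduct_mulVec]; ring

theorem mul_dotProduct_self_le_dotProduct_mulVec {c : ℝ} {x : n → ℝ}
    (hx : ∀ i, hM.eigenvalues i < c → ⇑(hM.eigenvectorBasis i) ⬝ᵥ x = 0) :
    c * (x ⬝ᵥ x) ≤ x ⬝ᵥ (M *ᵥ x) := by
  rw [hM.dotProduct_mulVec_eq_sum_eigenvalues, hM.dotProduct_eq_sum_eigenvectorBasis, mul_sum]
  refine sum_le_sum fun i _ => ?_
  rcases lt_or_ge (hM.eigenvalues i) c with hi | hi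
  · simp [hx i hi]
  · rw [← sq]; exact mul_le_mul_of_nonneg_right hi (sq_nonneg _)

theorem card_eigenvalues_lt_secondEig_le_one :
    #{i | hM.eigenvalues i < secondEig M hM} ≤ 1 := by
  have h := List.Pairwise.length_filter_lt_getD_one_le_one
    (Multiset.pairwise_sort (univ.val.map hM.eigenvalues) (· ≤ ·)) 0
  rwa [← Multiset.coe_card, ← Multiset.filter_coe, Multiset.sort_eq, Multiset.filter_map,
    Multiset.card_map] at h

/-- The only eigenvector below `λ₂` has a component along `w`, so `x ⊥ w` has none along it. -/
theorem secondEig_mul_dotProduct_self_le (hpos : 0 < secondEig M hM) {w x : n → ℝ}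
    (hw : M *ᵥ w = 0) (hw0 : w ≠ 0) (hx : w ⬝ᵥ x = 0) :
    secondEig M hM * (x ⬝ᵥ x) ≤ x ⬝ᵥ (M *ᵥ x) := by
  have hBw (i : n) : hM.eigenvalues i * (⇑(hM.eigenvectorBasis i) ⬝ᵥ w) = 0 := by
    rw [← eigenvectorBasis_dotProduct_mulVec, hw, dotProduct_zero]
  obtain ⟨j, hj⟩ : ∃ j, ⇑(hM.eigenvectorBasis j) ⬝ᵥ w ≠ 0 := by
    by_contra! h
    refine hw0 (dotProduct_self_eq_zero.mp ?_)
    simp only [hM.dotProduct_eq_sum_eigenvectorBasis w w, h, mul_zero, sum_const_zero]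
  have hμj : hM.eigenvalues j = 0 := (mul_eq_zero.mp (hBw j)).resolve_right hj
  have hlow (i : n) (hi : hM.eigenvalues i < secondEig M hM) : i = j :=
    card_le_one.mp hM.card_eigenvalues_lt_secondEig_le_one i (by simpa using hi) j
      (by simpa [hμj] using hpos)
  have hBw_ne (i : n) (hij : i ≠ j) : ⇑(hM.eigenvectorBasis i) ⬝ᵥ w = 0 := by
    refine (mul_eq_zero.mp (hBw i)).resolve_left fun h0 => hij (hlow i ?_)
    rwa [h0]
  refine hM.mul_dotProduct_self_le_dotProduct_mulVec fun i hi => ?_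
  obtain rfl := hlow i hi
  rw [hM.dotProduct_eq_sum_eigenvectorBasis, sum_eq_single i (fun k _ hk => by
    rw [hBw_ne k hk, zero_mul]) (by simp)] at hx
  exact (mul_eq_zero.mp hx).resolve_left hj

end Matrix.IsHermitian

namespace SimpleGraph

variable {V : Type*} [Fintype V] (G : SimpleGraph V) [DecidableRel G.Adj]

noncomputable def sqrtDegree (v : V) : ℝ := √(G.degree v)

noncomputable def invSqrtDegree (v : V) : ℝ :=
  if G.degree v = 0 then 0 else (√(G.degree v))⁻¹

def vol (S : Finset V) : ℝ := ∑ v ∈ S, (G.degree v : ℝ)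

theorem sqrtDegree_mul_self (v : V) : G.sqrtDegree v * G.sqrtDegree v = G.degree v :=
  Real.mul_self_sqrt (Nat.cast_nonneg _)

theorem invSqrtDegree_mul_sqrtDegree {v : V} (hv : G.degree v ≠ 0) :
    G.invSqrtDegree v * G.sqrtDegree v = 1 := by
  rw [invSqrtDegree, if_neg hv, sqrtDegree]
  exact inv_mul_cancel₀ (Real.sqrt_ne_zero'.mpr (by positivity))

theorem vol_nonneg (S : Finset V) : 0 ≤ G.vol S :=
  sum_nonneg fun _ _ => Nat.cast_nonneg _

theorem vol_le_vol_univ (S : Finset V) : G.vol S ≤ G.vol univ :=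
  sum_le_sum_of_subset_of_nonneg (subset_univ S) fun _ _ _ => Nat.cast_nonneg _

theorem sqrtDegree_ne_zero (hG : 0 < G.vol univ) : G.sqrtDegree ≠ 0 := by
  intro h
  exact hG.ne' (sum_eq_zero fun v _ => (Real.sqrt_eq_zero (Nat.cast_nonneg _)).mp (congrFun h v))

variable [DecidableEq V]

/-- Each edge of `∂S` is counted once, as the pair (vertex in `S`, vertex outside `S`). -/
def edgeBoundary (S : Finset V) : Finset (V × V) :=
  {p | G.Adj p.1 p.2 ∧ p.1 ∈ S ∧ p.2 ∉ S}

theorem diagonal_mul_adjMatrix_of_degree_ne_zero {f : V → ℝ}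
    (hf : ∀ v, G.degree v ≠ 0 → f v = 1) : diagonal f * G.adjMatrix ℝ = G.adjMatrix ℝ := by
  ext v u
  by_cases h : G.Adj v u
  · rw [diagonal_mul, hf v (G.degree_pos_iff_exists_adj v |>.mpr ⟨u, h⟩).ne', one_mul]
  · rw [diagonal_mul, adjMatrix_apply, if_neg h, mul_zero]

theorem adjMatrix_mul_diagonal_of_degree_ne_zero {f : V → ℝ}
    (hf : ∀ v, G.degree v ≠ 0 → f v = 1) : G.adjMatrix ℝ * diagonal f = G.adjMatrix ℝ := by
  rw [← G.isSymm_adjMatrix.eq, ← diagonal_transpose, ← transpose_mul,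
    G.diagonal_mul_adjMatrix_of_degree_ne_zero hf]

theorem normLap_eq :
    normLap G = 1 - diagonal G.invSqrtDegree * G.adjMatrix ℝ * diagonal G.invSqrtDegree :=
  rfl

theorem diagonal_sqrtDegree_mul_normLap_mul_diagonal_sqrtDegree :
    diagonal G.sqrtDegree * normLap G * diagonal G.sqrtDegree = G.lapMatrix ℝ := by
  set Ds := diagonal G.sqrtDegree
  set Dt := diagonal G.invSqrtDegree
  calc Ds * normLap G * Ds = Ds * Ds - Ds * Dt * G.adjMatrix ℝ * (Dt * Ds) := by
        rw [normLap_eq]; noncomm_ring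
    _ = G.lapMatrix ℝ := by
      simp only [Ds, Dt, diagonal_mul_diagonal, sqrtDegree_mul_self]
      rw [G.diagonal_mul_adjMatrix_of_degree_ne_zero fun v hv => by
          rw [mul_comm, G.invSqrtDegree_mul_sqrtDegree hv],
        G.adjMatrix_mul_diagonal_of_degree_ne_zero fun v hv => G.invSqrtDegree_mul_sqrtDegree hv]
      rfl

theorem normLap_mulVec_sqrtDegree : normLap G *ᵥ G.sqrtDegree = 0 := by
  have hDs : diagonal G.sqrtDegree *ᵥ (fun _ => 1) = G.sqrtDegree := by
    ext v; simp [mulVec_diagonal]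
  have hA : G.adjMatrix ℝ * (diagonal G.invSqrtDegree * diagonal G.sqrtDegree) = G.adjMatrix ℝ := by
    rw [diagonal_mul_diagonal,
      G.adjMatrix_mul_diagonal_of_degree_ne_zero fun v hv => G.invSqrtDegree_mul_sqrtDegree hv]
  rw [normLap_eq, sub_mulVec, one_mulVec, ← hDs, mulVec_mulVec, mul_assoc,
    mul_assoc, hA, ← mulVec_mulVec]
  ext v
  simp only [hDs, mulVec_diagonal, adjMatrix_mulVec_apply, sum_const, card_neighborFinset_eq_degree,
    nsmul_eq_mul, mul_one, Pi.sub_apply, Pi.zero_apply]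
  by_cases hv : G.degree v = 0
  · simp [sqrtDegree, invSqrtDegree, hv]
  · rw [← sqrtDegree_mul_self, ← mul_assoc, G.invSqrtDegree_mul_sqrtDegree hv, one_mul, sub_self]

theorem dotProduct_normLap_mulVec_diagonal_sqrtDegree (y : V → ℝ) :
    (diagonal G.sqrtDegree *ᵥ y) ⬝ᵥ (normLap G *ᵥ (diagonal G.sqrtDegree *ᵥ y)) =
      y ⬝ᵥ (G.lapMatrix ℝ *ᵥ y) := by
  rw [← diagonal_sqrtDegree_mul_normLap_mul_diagonal_sqrtDegree, ← mulVec_mulVec, ← mulVec_mulVec,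
    dotProduct_mulVec y, ← mulVec_transpose, diagonal_transpose]

theorem card_edgeBoundary_eq_sum (S : Finset V) :
    (#(G.edgeBoundary S) : ℝ) = ∑ i, ∑ j, if G.Adj i j ∧ i ∈ S ∧ j ∉ S then 1 else 0 := by
  rw [edgeBoundary, card_filter, Nat.cast_sum, ← Fintype.sum_prod_type']
  push_cast
  rfl

theorem dotProduct_lapMatrix_mulVec_eq_card_edgeBoundary {S : Finset V} {c : ℝ} {y : V → ℝ}
    (hy : ∀ v, y v = (if v ∈ S then 1 else 0) - c) :
    y ⬝ᵥ (G.lapMatrix ℝ *ᵥ y) = #(G.edgeBoundary S) := by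
  have hsq (i j : V) : (if G.Adj i j then (y i - y j) ^ 2 else 0) =
      (if G.Adj i j ∧ i ∈ S ∧ j ∉ S then 1 else 0) +
        (if G.Adj j i ∧ j ∈ S ∧ i ∉ S then 1 else 0) := by
    rw [hy, hy, sub_sub_sub_cancel_right]
    by_cases G.Adj i j <;> by_cases i ∈ S <;> by_cases j ∈ S <;> simp [*, G.adj_comm j i]
  rw [← toLinearMap₂'_apply', lapMatrix_toLinearMap₂', card_edgeBoundary_eq_sum]
  simp only [hsq, sum_add_distrib]
  rw [sum_comm (f := fun i j => if G.Adj j i ∧ j ∈ S ∧ i ∉ S then (1 : ℝ) else 0)]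
  ring

theorem sum_degree_mul_eq {S : Finset V} {c : ℝ} {y : V → ℝ}
    (hy : ∀ v, y v = (if v ∈ S then 1 else 0) - c) :
    ∑ v, (G.degree v : ℝ) * y v = G.vol S - c * G.vol univ := by
  simp only [hy, mul_sub, mul_ite, mul_one, mul_zero, sum_sub_distrib, sum_ite_mem, univ_inter,
    ← sum_mul, vol]
  ring

theorem sum_degree_mul_sq_eq {S : Finset V} {c : ℝ} {y : V → ℝ}
    (hy : ∀ v, y v = (if v ∈ S then 1 else 0) - c) :
    ∑ v, (G.degree v : ℝ) * y v ^ 2 = (1 - 2 * c) * G.vol S + c ^ 2 * G.vol univ := by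
  have hsq (v : V) : y v ^ 2 = (if v ∈ S then 1 - 2 * c else 0) + c ^ 2 := by
    rw [hy]; split_ifs <;> ring
  simp only [hsq, mul_add, mul_ite, mul_zero, sum_add_distrib, sum_ite_mem, univ_inter,
    ← sum_mul, vol]
  ring

theorem dotProduct_sqrtDegree_diagonal_mulVec (y : V → ℝ) :
    G.sqrtDegree ⬝ᵥ (diagonal G.sqrtDegree *ᵥ y) = ∑ v, (G.degree v : ℝ) * y v := by
  simp only [dotProduct, mulVec_diagonal, ← mul_assoc, sqrtDegree_mul_self]

theorem dotProduct_self_diagonal_sqrtDegree_mulVec (y : V → ℝ) :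
    (diagonal G.sqrtDegree *ᵥ y) ⬝ᵥ (diagonal G.sqrtDegree *ᵥ y) =
      ∑ v, (G.degree v : ℝ) * y v ^ 2 := by
  simp only [dotProduct, mulVec_diagonal, ← sqrtDegree_mul_self]
  exact sum_congr rfl fun _ _ => by ring

theorem secondEig_mul_vol_le_card_edgeBoundary (hL : (normLap G).IsHermitian)
    (hpos : 0 < secondEig (normLap G) hL) (hG : 0 < G.vol univ) (S : Finset V) :
    secondEig (normLap G) hL * (G.vol S * (1 - G.vol S / G.vol univ)) ≤ #(G.edgeBoundary S) := by
  set σ := G.vol S / G.vol univ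
  set y : V → ℝ := fun v => (if v ∈ S then 1 else 0) - σ
  have hy (v : V) : y v = (if v ∈ S then 1 else 0) - σ := rfl
  have hσ : σ * G.vol univ = G.vol S := div_mul_cancel₀ _ hG.ne'
  have horth : G.sqrtDegree ⬝ᵥ (diagonal G.sqrtDegree *ᵥ y) = 0 := by
    rw [dotProduct_sqrtDegree_diagonal_mulVec, G.sum_degree_mul_eq hy, hσ, sub_self]
  have hnorm : (diagonal G.sqrtDegree *ᵥ y) ⬝ᵥ (diagonal G.sqrtDegree *ᵥ y) =
      G.vol S * (1 - σ) := by
    rw [dotProduct_self_diagonal_sqrtDegree_mulVec, G.sum_degree_mul_sq_eq hy]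
    linear_combination σ * hσ
  have h := hL.secondEig_mul_dotProduct_self_le hpos G.normLap_mulVec_sqrtDegree
    (G.sqrtDegree_ne_zero hG) horth
  rwa [hnorm, dotProduct_normLap_mulVec_diagonal_sqrtDegree,
    G.dotProduct_lapMatrix_mulVec_eq_card_edgeBoundary hy] at h

end SimpleGraph

/-- for a finite simple graph `G` with normalized-Laplacian second
eigenvalue `λ₂` and a vertex subset `S`, the edge boundary (here counted as ordered
pairs `(u,v)` with `u ∈ S`, `v ∉ S`, `u ~ v`, which is exactly `|∂S|`) satisfies
`|∂S| ≥ λ₂ · vol(S) · (1 − vol(S)/vol(G))`. -/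
theorem stmt_0 {V : Type*} [Fintype V] [DecidableEq V]
    (G : SimpleGraph V) [DecidableRel G.Adj]
    (hL : (normLap G).IsHermitian) (lam2 : ℝ) (hlam : lam2 = secondEig (normLap G) hL)
    (S : Finset V) :
    ((Finset.univ.filter fun p : V × V => G.Adj p.1 p.2 ∧ p.1 ∈ S ∧ p.2 ∉ S).card : ℝ) ≥
      lam2 * (∑ v ∈ S, (G.degree v : ℝ)) *
        (1 - (∑ v ∈ S, (G.degree v : ℝ)) / (∑ v : V, (G.degree v : ℝ))) := by
  subst hlam
  change _ * G.vol S * (1 - G.vol S / G.vol univ) ≤ #(G.edgeBoundary S)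
  rw [mul_assoc]
  have hcut : (0 : ℝ) ≤ #(G.edgeBoundary S) := Nat.cast_nonneg _
  rcases (G.vol_nonneg univ).eq_or_lt with hG | hG
  · have hS : G.vol S = 0 := le_antisymm (hG ▸ G.vol_le_vol_univ S) (G.vol_nonneg S)
    simp [hS, hcut]
  rcases le_or_gt (secondEig (normLap G) hL) 0 with hneg | hpos
  · have hS : 0 ≤ G.vol S * (1 - G.vol S / G.vol univ) :=
      mul_nonneg (G.vol_nonneg S) (sub_nonneg.mpr (div_le_one_of_le₀ (G.vol_le_vol_univ S) hG.le))
    exact (mul_nonpos_of_nonpos_of_nonneg hneg hS).trans hcut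
  · exact G.secondEig_mul_vol_le_card_edgeBoundary hL hpos hG S
end

section
/- Let G be a d_min–d_max bounded-degree graph (every vertex has degree in [d_min, d_max]) with normalized Laplacian second eigenvalue λ₂(G) ≥ 9/10, and let G^I be the graph obtained from G by adding self-loops to every vertex so that every vertex has degree exactly d_max (a self-loop adds 1 to the degree). Then the second smallest eigenvalue of the normalized Laplacian of G^I satisfies λ₂(G^I) ≥ (1/8)·(d_min/d_max)². -/
open Finset

/-- The normalized Laplacian of the regularization `G^I` of `G`, obtained by adding
`d_max − deg(v)` self-loops at each vertex `v` (a loop adds 1 to the degree), so that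
every vertex has degree exactly `d_max`:
`L(G^I) = I − (1/d_max)·(A + diag(d_max − deg v))`. -/
noncomputable def normLapReg {V : Type*} [Fintype V] [DecidableEq V]
    (G : SimpleGraph V) [DecidableRel G.Adj] (dmax : ℕ) : Matrix V V ℝ :=
  1 - ((dmax : ℝ))⁻¹ •
    (G.adjMatrix ℝ + Matrix.diagonal fun v => ((dmax : ℝ) - (G.degree v : ℝ)))

/-!
Instead of going through conductance and Cheeger's inequality, compare Rayleigh quotients
directly, which gives the stronger bound `λ₂(G^I) ≥ λ₂(G) · d_min / d_max`. Since `G^I` is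
`d_max`-regular, `L(G^I) = (D - A) / d_max`, while the substitution `y = D^{1/2} x` turns
`y ⬝ L(G) y` into `x ⬝ (D - A) x` and `y ⬝ y ≥ d_min · x ⬝ x`. By Courant–Fischer, `λ₂(G) ≥ s`
makes the first form at least `s · y ⬝ y` on a hyperplane, hence the second at least
`s · d_min / d_max · x ⬝ x` on a hyperplane, so `λ₂(G^I) ≥ s · d_min / d_max`. Finally
`(1/8) r² ≤ (9/10) r` for `r = d_min / d_max ≤ 1`.
-/

theorem Matrix.exists_dotProduct_smul_add_smul_eq_zero {V R : Type*} [Fintype V] [CommRing R]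
    [Nontrivial R] (w u v : V → R) :
    ∃ c d : R, (c ≠ 0 ∨ d ≠ 0) ∧ w ⬝ᵥ (c • u + d • v) = 0 := by
  by_cases hu : w ⬝ᵥ u = 0
  · exact ⟨1, 0, .inl one_ne_zero, by simp [hu]⟩
  · refine ⟨w ⬝ᵥ v, -(w ⬝ᵥ u), .inr (neg_ne_zero.mpr hu), ?_⟩
    simp only [dotProduct_add, dotProduct_smul, smul_eq_mul]
    ring

namespace Matrix.IsHermitian

variable {V : Type*} [Fintype V] [DecidableEq V] {A : Matrix V V ℝ} (hA : A.IsHermitian)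

theorem sum_dotProduct_eigenvectorBasis_mul (x y : V → ℝ) :
    ∑ i, (x ⬝ᵥ (hA.eigenvectorBasis i).ofLp) * ((hA.eigenvectorBasis i).ofLp ⬝ᵥ y) =
      x ⬝ᵥ y := by
  have := hA.eigenvectorBasis.sum_inner_mul_inner (WithLp.toLp 2 x) (WithLp.toLp 2 y)
  simp only [EuclideanSpace.inner_eq_star_dotProduct, star_trivial] at this
  rw [dotProduct_comm x y, ← this]
  exact Finset.sum_congr rfl fun i _ => by rw [dotProduct_comm x, dotProduct_comm _ y, mul_comm]

theorem eigenvectorBasis_dotProduct (i j : V) :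
    (hA.eigenvectorBasis i).ofLp ⬝ᵥ (hA.eigenvectorBasis j).ofLp = if i = j then 1 else 0 := by
  have := orthonormal_iff_ite.mp hA.eigenvectorBasis.orthonormal j i
  simpa only [EuclideanSpace.inner_eq_star_dotProduct, star_trivial, eq_comm (a := j)] using this

theorem eigenvectorBasis_dotProduct_mulVec_s2 (i : V) (x : V → ℝ) :
    (hA.eigenvectorBasis i).ofLp ⬝ᵥ (A *ᵥ x) =
      hA.eigenvalues i * ((hA.eigenvectorBasis i).ofLp ⬝ᵥ x) := by
  have hsymm : Aᵀ = A := by simpa [conjTranspose_eq_transpose_of_trivial] using hA.eq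
  rw [dotProduct_mulVec, ← mulVec_transpose, hsymm, hA.mulVec_eigenvectorBasis, smul_dotProduct,
    smul_eq_mul]

theorem dotProduct_mulVec_eq_sum (x : V → ℝ) :
    x ⬝ᵥ (A *ᵥ x) = ∑ i, hA.eigenvalues i * ((hA.eigenvectorBasis i).ofLp ⬝ᵥ x) ^ 2 := by
  rw [← hA.sum_dotProduct_eigenvectorBasis_mul]
  refine Finset.sum_congr rfl fun i _ => ?_
  rw [eigenvectorBasis_dotProduct_mulVec_s2, dotProduct_comm]; ring

theorem dotProduct_self_eq_sum (x : V → ℝ) :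
    x ⬝ᵥ x = ∑ i, ((hA.eigenvectorBasis i).ofLp ⬝ᵥ x) ^ 2 := by
  rw [← hA.sum_dotProduct_eigenvectorBasis_mul]
  refine Finset.sum_congr rfl fun i _ => ?_
  rw [dotProduct_comm]; ring

theorem mul_dotProduct_self_le_of_dotProduct_eq_zero {t : ℝ} {i₀ : V}
    (h : ∀ i ≠ i₀, t ≤ hA.eigenvalues i) {x : V → ℝ}
    (hx : (hA.eigenvectorBasis i₀).ofLp ⬝ᵥ x = 0) :
    t * (x ⬝ᵥ x) ≤ x ⬝ᵥ (A *ᵥ x) := by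
  rw [hA.dotProduct_mulVec_eq_sum, hA.dotProduct_self_eq_sum, Finset.mul_sum]
  refine Finset.sum_le_sum fun i _ => ?_
  rcases eq_or_ne i i₀ with rfl | hi
  · simp [hx]
  · exact mul_le_mul_of_nonneg_right (h i hi) (sq_nonneg _)

theorem subsingleton_setOf_eigenvalues_lt {t : ℝ} (w : V → ℝ)
    (h : ∀ x, w ⬝ᵥ x = 0 → t * (x ⬝ᵥ x) ≤ x ⬝ᵥ (A *ᵥ x)) :
    {i | hA.eigenvalues i < t}.Subsingleton := by
  -- the span of two eigenvectors with eigenvalues below `t` would meet the hyperplane `w ⬝ᵥ x = 0`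
  intro i (hi : hA.eigenvalues i < t) j (hj : hA.eigenvalues j < t)
  by_contra hij
  obtain ⟨c, d, hcd, hw⟩ := exists_dotProduct_smul_add_smul_eq_zero w
    (hA.eigenvectorBasis i).ofLp (hA.eigenvectorBasis j).ofLp
  have key := h _ hw
  simp only [mulVec_add, mulVec_smul, hA.mulVec_eigenvectorBasis, dotProduct_add, add_dotProduct,
    dotProduct_smul, smul_dotProduct, smul_eq_mul, eigenvectorBasis_dotProduct, if_neg hij,
    if_neg (Ne.symm hij), if_true, mul_zero, add_zero, zero_add, mul_one] at key
  rcases hcd with hc | hd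
  · nlinarith [mul_lt_mul_of_pos_left hi (mul_self_pos.2 hc),
      mul_le_mul_of_nonneg_left hj.le (mul_self_nonneg d)]
  · nlinarith [mul_le_mul_of_nonneg_left hi.le (mul_self_nonneg c),
      mul_lt_mul_of_pos_left hj (mul_self_pos.2 hd)]

end Matrix.IsHermitian

theorem List.le_getD_one_iff_countP_lt_le_one {α : Type*} [LinearOrder α] {l : List α}
    (hl : l.Pairwise (· ≤ ·)) (hlen : 2 ≤ l.length) (d t : α) :
    t ≤ l.getD 1 d ↔ l.countP (· < t) ≤ 1 := by
  obtain _ | ⟨a, _ | ⟨b, tl⟩⟩ := l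
  · simp at hlen
  · simp at hlen
  have hab : a ≤ b := List.rel_of_pairwise_cons hl (by simp)
  have htl : ∀ x ∈ tl, b ≤ x := fun x hx => List.rel_of_pairwise_cons hl.of_cons hx
  simp only [List.getD_cons_succ, List.getD_cons_zero, List.countP_cons]
  constructor
  · intro htb
    have : tl.countP (· < t) = 0 := List.countP_eq_zero.2 fun x hx => by
      simpa using htb.trans (htl x hx)
    rw [this, if_neg (by simpa using htb)]
    split <;> omega
  · intro hcount
    by_contra! hbt
    simp [hbt, hab.trans_lt hbt] at hcount

section secondEig

variable {V : Type*} [Fintype V] [DecidableEq V] {M : Matrix V V ℝ}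

theorem le_secondEig_iff (hM : M.IsHermitian) (hV : 2 ≤ Fintype.card V) {t : ℝ} :
    t ≤ secondEig M hM ↔ {i | hM.eigenvalues i < t}.Subsingleton := by
  rw [secondEig, List.le_getD_one_iff_countP_lt_le_one (Multiset.pairwise_sort _ _) (by simpa)]
  rw [← Multiset.coe_countP, Multiset.sort_eq, Multiset.countP_map]
  rw [← Finset.filter_val, Finset.card_val, Finset.card_le_one]
  simp [Set.Subsingleton]

theorem secondEig_eq_zero_of_card_le_one (hM : M.IsHermitian) (hV : Fintype.card V ≤ 1) : secondEig M hM = 0 :=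
  List.getD_eq_default _ _ (by simpa)

theorem exists_forall_ne_le_eigenvalues_of_le_secondEig (hM : M.IsHermitian)
    (hV : 2 ≤ Fintype.card V) {t : ℝ} (h : t ≤ secondEig M hM) : ∃ i₀, ∀ i ≠ i₀, t ≤ hM.eigenvalues i := by
  by_cases hlt : ∃ i₀, hM.eigenvalues i₀ < t
  · obtain ⟨i₀, hi₀⟩ := hlt
    exact ⟨i₀, fun i hi => not_lt.1 fun hit => hi ((le_secondEig_iff hM hV).1 h hit hi₀)⟩
  · simp only [not_exists, not_lt] at hlt
    obtain ⟨v₀⟩ : Nonempty V := Fintype.card_pos_iff.1 (by omega)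
    exact ⟨v₀, fun i _ => hlt i⟩

theorem secondEig_nonneg (hM : M.IsHermitian) (hpsd : M.PosSemidef) : 0 ≤ secondEig M hM := by
  rcases le_or_gt (Fintype.card V) 1 with hV | hV
  · exact (secondEig_eq_zero_of_card_le_one hM hV).ge
  · exact (le_secondEig_iff hM hV).2 fun i hi => absurd hi (not_lt.2 (hpsd.eigenvalues_nonneg i))

end secondEig

namespace SimpleGraph

open Matrix

variable {V : Type*} [Fintype V] [DecidableEq V] (G : SimpleGraph V) [DecidableRel G.Adj]

theorem normLapReg_eq_smul_lapMatrix {dmax : ℕ} (h : (dmax : ℝ) ≠ 0) :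
    normLapReg G dmax = (dmax : ℝ)⁻¹ • G.lapMatrix ℝ := by
  have hdiag : diagonal (fun v => (dmax : ℝ) - G.degree v) = (dmax : ℝ) • 1 - G.degMatrix ℝ := by
    rw [degMatrix, smul_one_eq_diagonal, diagonal_sub]
  rw [normLapReg, lapMatrix, hdiag, smul_add, smul_sub, smul_smul, inv_mul_cancel₀ h, one_smul,
    smul_sub]
  abel

theorem posSemidef_normLapReg (dmax : ℕ) : (normLapReg G dmax).PosSemidef := by
  rcases eq_or_ne (dmax : ℝ) 0 with h | h
  · simpa [normLapReg, h] using PosSemidef.one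
  · rw [normLapReg_eq_smul_lapMatrix G h]
    exact (G.posSemidef_lapMatrix ℝ).smul (by positivity)

theorem dotProduct_normLap_mulVec_sqrt_degree (hd : ∀ v, 0 < G.degree v) (x : V → ℝ) :
    (fun v => √(G.degree v) * x v) ⬝ᵥ (normLap G *ᵥ fun v => √(G.degree v) * x v)
      = x ⬝ᵥ (G.lapMatrix ℝ *ᵥ x) := by
  set y : V → ℝ := fun v => √(G.degree v) * x v
  set Dh : Matrix V V ℝ :=
    diagonal fun v => if G.degree v = 0 then 0 else (√(G.degree v))⁻¹
  have hsqrt : ∀ v, √(G.degree v : ℝ) ≠ 0 := fun v => by have := hd v; positivity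
  have hDy : Dh *ᵥ y = x := funext fun v => by
    simp [Dh, y, mulVec_diagonal, (hd v).ne', hsqrt v]
  have hyD : y ᵥ* Dh = x := by rw [← hDy, ← vecMul_transpose, diagonal_transpose]
  have hyy : y ⬝ᵥ y = x ⬝ᵥ (G.degMatrix ℝ *ᵥ x) := by
    rw [G.dotProduct_mulVec_degMatrix]
    refine Finset.sum_congr rfl fun v _ => ?_
    rw [mul_mul_mul_comm, Real.mul_self_sqrt (Nat.cast_nonneg _), mul_assoc]
  have hN : normLap G = 1 - Dh * G.adjMatrix ℝ * Dh := rfl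
  rw [hN, sub_mulVec, one_mulVec, dotProduct_sub, ← mulVec_mulVec, ← mulVec_mulVec, hDy,
    dotProduct_mulVec, hyD, hyy, lapMatrix, sub_mulVec, dotProduct_sub]

theorem le_secondEig_normLapReg (hV : 2 ≤ Fintype.card V) {dmin dmax : ℕ} (hdmin : 0 < dmin)
    (hdeg : ∀ v, dmin ≤ G.degree v) (hdmax : (dmax : ℝ) ≠ 0) (hL : (normLap G).IsHermitian)
    {s : ℝ} (hs : 0 ≤ s) (hlam : s ≤ secondEig (normLap G) hL)
    (hLI : (normLapReg G dmax).IsHermitian) :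
    s * dmin / dmax ≤ secondEig (normLapReg G dmax) hLI := by
  obtain ⟨i₀, hi₀⟩ := exists_forall_ne_le_eigenvalues_of_le_secondEig hL hV hlam
  set w := (hL.eigenvectorBasis i₀).ofLp
  refine (le_secondEig_iff hLI hV).2 <| hLI.subsingleton_setOf_eigenvalues_lt
    (fun v => √(G.degree v) * w v) fun x hx => ?_
  set y : V → ℝ := fun v => √(G.degree v) * x v
  have hwy : w ⬝ᵥ y = 0 := by
    rw [← hx]
    exact Finset.sum_congr rfl fun v _ => by ring
  have hyy : dmin * (x ⬝ᵥ x) ≤ y ⬝ᵥ y := by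
    rw [dotProduct, dotProduct, Finset.mul_sum]
    refine Finset.sum_le_sum fun v _ => ?_
    rw [show y v * y v = G.degree v * (x v * x v) by
      rw [mul_mul_mul_comm, Real.mul_self_sqrt (Nat.cast_nonneg _)]]
    exact mul_le_mul_of_nonneg_right (by exact_mod_cast hdeg v) (mul_self_nonneg _)
  have hLy := hL.mul_dotProduct_self_le_of_dotProduct_eq_zero hi₀ hwy
  rw [G.dotProduct_normLap_mulVec_sqrt_degree (fun v => hdmin.trans_le (hdeg v))] at hLy
  rw [G.normLapReg_eq_smul_lapMatrix hdmax, smul_mulVec, dotProduct_smul, smul_eq_mul]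
  calc s * dmin / dmax * (x ⬝ᵥ x) = (dmax : ℝ)⁻¹ * (s * (dmin * (x ⬝ᵥ x))) := by ring
    _ ≤ (dmax : ℝ)⁻¹ * (s * (y ⬝ᵥ y)) := by gcongr
    _ ≤ (dmax : ℝ)⁻¹ * (x ⬝ᵥ (G.lapMatrix ℝ *ᵥ x)) := by gcongr

end SimpleGraph

/-- if every degree of `G` lies in `[d_min, d_max]` and
`λ₂(G) ≥ 9/10`, then the regularized graph `G^I` satisfies
`λ₂(G^I) ≥ (1/8)·(d_min/d_max)²`. -/
theorem stmt_2 {V : Type*} [Fintype V] [DecidableEq V]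
    (G : SimpleGraph V) [DecidableRel G.Adj] (dmin dmax : ℕ)
    (hdeg : ∀ v : V, dmin ≤ G.degree v ∧ G.degree v ≤ dmax)
    (hL : (normLap G).IsHermitian)
    (hlam : secondEig (normLap G) hL ≥ 9 / 10)
    (hLI : (normLapReg G dmax).IsHermitian) :
    secondEig (normLapReg G dmax) hLI ≥ (1 / 8) * ((dmin : ℝ) / (dmax : ℝ)) ^ 2 := by
  have hV : 2 ≤ Fintype.card V := by
    by_contra! h
    rw [secondEig_eq_zero_of_card_le_one hL (by omega)] at hlam
    norm_num at hlam
  obtain ⟨v₀⟩ : Nonempty V := Fintype.card_pos_iff.1 (by omega)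
  have hle : (dmin : ℝ) ≤ dmax := by exact_mod_cast (hdeg v₀).1.trans (hdeg v₀).2
  rcases Nat.eq_zero_or_pos dmin with rfl | hdmin
  · simpa using secondEig_nonneg hLI (G.posSemidef_normLapReg dmax)
  have hdmax : (0 : ℝ) < dmax := (Nat.cast_pos.2 hdmin).trans_le hle
  have hr : (dmin : ℝ) / dmax ≤ 1 := (div_le_one hdmax).2 hle
  have hr₀ : (0 : ℝ) ≤ dmin / dmax := by positivity
  calc (1 / 8) * ((dmin : ℝ) / dmax) ^ 2 ≤ 9 / 10 * dmin / dmax := by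
        rw [mul_div_assoc]; nlinarith
    _ ≤ secondEig (normLapReg G dmax) hLI :=
      G.le_secondEig_normLapReg hV hdmin (fun v => (hdeg v).1) hdmax.ne' hL (by norm_num) hlam hLI
end

section
/- Consider three sequences of vectors x⁰_i, x^I_i, x¹_i ∈ ℝ^V, i = 0,…,τ, all starting from the same initial vector x₀ with entries in [0,1]. Suppose x^I is updated by the ideal rule x^I_i(v) = Σ_{u ∈ N^I(v)} (1/(2d_max)) x^I_{i−1}(u) + ((2d_max − |N^I(v)|)/(2d_max)) x^I_{i−1}(v) with |N^I(v)| = d_max for all v; x⁰ is updated by x⁰_i(v) = Σ_{u ∈ N_i(v)} (1/(2d_max)) x⁰_{i−1}(u) + (1/2) x⁰_{i−1}(v); and x¹ is updated by x¹_i(v) = Σ_{u ∈ N_i(v)} (1/(2d_max)) x¹_{i−1}(u) + (1/2) x¹_{i−1}(v) + (d_max − |N_i(v)|)/(2d_max), where N_i(v) ⊆ N^I(v) for every i and v. Then for all i and v: x⁰_i(v) ≤ x^I_i(v) ≤ x¹_i(v). -/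
open Finset

/-- the ideal load-balancing sequence `x^I` is sandwiched between the
sequences `x⁰` (skewed toward 0) and `x¹` (skewed toward 1).  All three sequences
start from the same initial vector with entries in `[0,1]`, `N^I(v)` is a fixed
neighborhood of size exactly `d_max`, and `N_i(v) ⊆ N^I(v)` for every round `i`. -/
theorem stmt_5 {V : Type*} [Fintype V] [DecidableEq V]
    (dmax : ℕ) (hdmax : 0 < dmax) (τ : ℕ)
    (NI : V → Finset V) (hNI : ∀ v, (NI v).card = dmax)
    (N : ℕ → V → Finset V) (hN : ∀ i v, N i v ⊆ NI v)
    (x0 : V → ℝ) (hx0 : ∀ v, 0 ≤ x0 v ∧ x0 v ≤ 1)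
    (xI xzero xone : ℕ → V → ℝ)
    (hI0 : ∀ v, xI 0 v = x0 v)
    (hz0 : ∀ v, xzero 0 v = x0 v)
    (ho0 : ∀ v, xone 0 v = x0 v)
    (hIrec : ∀ i < τ, ∀ v,
      xI (i + 1) v =
        (∑ u ∈ NI v, (1 / (2 * (dmax : ℝ))) * xI i u) +
          ((2 * (dmax : ℝ) - ((NI v).card : ℝ)) / (2 * (dmax : ℝ))) * xI i v)
    (hzrec : ∀ i < τ, ∀ v,
      xzero (i + 1) v =
        (∑ u ∈ N (i + 1) v, (1 / (2 * (dmax : ℝ))) * xzero i u) +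
          (1 / 2) * xzero i v)
    (horec : ∀ i < τ, ∀ v,
      xone (i + 1) v =
        (∑ u ∈ N (i + 1) v, (1 / (2 * (dmax : ℝ))) * xone i u) +
          (1 / 2) * xone i v +
          ((dmax : ℝ) - ((N (i + 1) v).card : ℝ)) / (2 * (dmax : ℝ))) :
    ∀ i ≤ τ, ∀ v, xzero i v ≤ xI i v ∧ xI i v ≤ xone i v := by
  have hd : (0:ℝ) < dmax := by exact_mod_cast hdmax
  set c : ℝ := 1 / (2 * (dmax : ℝ)) with hc
  have hcpos : 0 < c := by rw [hc]; positivity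
  have hcd : c * dmax = 1 / 2 := by
    rw [hc]; field_simp
  have key : ∀ i ≤ τ, ∀ v,
      0 ≤ xzero i v ∧ xzero i v ≤ xI i v ∧ xI i v ≤ xone i v ∧ xone i v ≤ 1 := by
    intro i
    induction i with
    | zero =>
      intro _ v
      rw [hz0, hI0, ho0]
      exact ⟨(hx0 v).1, le_refl _, le_refl _, (hx0 v).2⟩
    | succ i ih =>
      intro hi v
      have hi' : i < τ := Nat.lt_of_succ_le hi
      have IH := ih (le_of_lt hi')
      have hIz : ∀ u, 0 ≤ xI i u := fun u => le_trans (IH u).1 (IH u).2.1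
      have hIone : ∀ u, xI i u ≤ 1 := fun u => le_trans (IH u).2.2.1 (IH u).2.2.2
      have hcard : (N (i+1) v).card ≤ dmax := by
        rw [← hNI v]; exact Finset.card_le_card (hN (i+1) v)
      have hcards : ((NI v \ N (i+1) v).card : ℝ) = (dmax : ℝ) - ((N (i+1) v).card : ℝ) := by
        rw [Finset.card_sdiff_of_subset (hN (i+1) v), hNI v, Nat.cast_sub hcard]
      -- rewrite the ideal recurrence
      have hIrec' : xI (i+1) v =
          (∑ u ∈ N (i+1) v, c * xI i u) + (∑ u ∈ NI v \ N (i+1) v, c * xI i u)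
            + (1/2) * xI i v := by
        rw [hIrec i hi' v, hNI v, ← Finset.sum_sdiff (hN (i+1) v)]
        have h : (2 * (dmax:ℝ) - (dmax:ℝ)) / (2 * (dmax:ℝ)) = 1/2 := by
          field_simp; ring
        rw [h]; ring
      constructor
      · -- 0 ≤ xzero (i+1) v
        rw [hzrec i hi' v]
        have h1 : 0 ≤ ∑ u ∈ N (i+1) v, c * xzero i u :=
          Finset.sum_nonneg fun u _ => mul_nonneg hcpos.le (IH u).1
        have h2 : 0 ≤ (1/2 : ℝ) * xzero i v := by
          have := (IH v).1; linarith
        linarith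
      refine ⟨?_, ?_, ?_⟩
      · -- xzero ≤ xI
        rw [hzrec i hi' v, hIrec']
        have h1 : ∑ u ∈ N (i+1) v, c * xzero i u ≤ ∑ u ∈ N (i+1) v, c * xI i u :=
          Finset.sum_le_sum fun u _ => mul_le_mul_of_nonneg_left (IH u).2.1 hcpos.le
        have h2 : 0 ≤ ∑ u ∈ NI v \ N (i+1) v, c * xI i u :=
          Finset.sum_nonneg fun u _ => mul_nonneg hcpos.le (hIz u)
        have h3 : (1/2 : ℝ) * xzero i v ≤ (1/2) * xI i v := by
          have := (IH v).2.1; linarith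
        linarith
      · -- xI ≤ xone
        rw [horec i hi' v, hIrec']
        have h1 : ∑ u ∈ N (i+1) v, c * xI i u ≤ ∑ u ∈ N (i+1) v, c * xone i u :=
          Finset.sum_le_sum fun u _ => mul_le_mul_of_nonneg_left (IH u).2.2.1 hcpos.le
        have h2 : ∑ u ∈ NI v \ N (i+1) v, c * xI i u ≤
            ((dmax : ℝ) - ((N (i+1) v).card : ℝ)) / (2 * (dmax : ℝ)) := by
          calc ∑ u ∈ NI v \ N (i+1) v, c * xI i u
              ≤ ∑ u ∈ NI v \ N (i+1) v, c * 1 :=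
                Finset.sum_le_sum fun u _ => mul_le_mul_of_nonneg_left (hIone u) hcpos.le
            _ = ((NI v \ N (i+1) v).card : ℝ) * c := by
                rw [Finset.sum_const, nsmul_eq_mul, mul_one]
            _ = ((dmax : ℝ) - ((N (i+1) v).card : ℝ)) / (2 * (dmax : ℝ)) := by
                rw [hcards, hc]; field_simp
        have h3 : (1/2 : ℝ) * xI i v ≤ (1/2) * xone i v := by
          have := (IH v).2.2.1; linarith
        linarith
      · -- xone ≤ 1
        rw [horec i hi' v]
        have h1 : ∑ u ∈ N (i+1) v, c * xone i u ≤ ((N (i+1) v).card : ℝ) * c := by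
          calc ∑ u ∈ N (i+1) v, c * xone i u
              ≤ ∑ u ∈ N (i+1) v, c * 1 :=
                Finset.sum_le_sum fun u _ => mul_le_mul_of_nonneg_left (IH u).2.2.2 hcpos.le
            _ = ((N (i+1) v).card : ℝ) * c := by
                rw [Finset.sum_const, nsmul_eq_mul, mul_one]
        have h2 : (1/2 : ℝ) * xone i v ≤ 1/2 := by
          have := (IH v).2.2.2; linarith
        have h3 : ((dmax : ℝ) - ((N (i+1) v).card : ℝ)) / (2 * (dmax : ℝ))
            = c * dmax - ((N (i+1) v).card : ℝ) * c := by
          rw [hc]; field_simp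
        rw [h3, hcd] at *
        linarith
  intro i hi v
  exact ⟨(key i hi v).2.1, (key i hi v).2.2.1⟩
end

section
/- Consider two sequences of vectors x⁰_i, x_i ∈ ℝ^V starting from the same initial vector with entries in [0,1], where x_i(v) = Σ_{u ∈ N_i(v)} (1/(2d_max)) x_{i−1}(u) + ((2d_max − |N_i(v)|)/(2d_max)) x_{i−1}(v) and x⁰_i(v) = Σ_{u ∈ N_i(v)} (1/(2d_max)) x⁰_{i−1}(u) + (1/2) x⁰_{i−1}(v), with |N_i(v)| ≤ d_max for all i, v. Then x⁰_i(v) ≤ x_i(v) for all i and v. Similarly, defining x¹_i(v) = Σ_{u ∈ N_i(v)} (1/(2d_max)) x¹_{i−1}(u) + (1/2) x¹_{i−1}(v) + (d_max − |N_i(v)|)/(2d_max), one has x_i(v) ≤ x¹_i(v) for all i, v. -/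
open Finset

/-- the actual load-balancing sequence `x` is sandwiched between the
sequence `x⁰` skewed toward `0` and the sequence `x¹` skewed toward `1`.  All
sequences start from the same initial vector with entries in `[0,1]`, and
`|N_i(v)| ≤ d_max` for all rounds `i` and vertices `v`. -/
theorem stmt_6 {V : Type*} [Fintype V] [DecidableEq V]
    (dmax : ℕ) (hdmax : 0 < dmax) (τ : ℕ)
    (N : ℕ → V → Finset V) (hN : ∀ i v, (N i v).card ≤ dmax)
    (x0 : V → ℝ) (hx0 : ∀ v, 0 ≤ x0 v ∧ x0 v ≤ 1)
    (x xzero xone : ℕ → V → ℝ)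
    (hstart : ∀ v, x 0 v = x0 v ∧ xzero 0 v = x0 v ∧ xone 0 v = x0 v)
    (hrec : ∀ i < τ, ∀ v,
      x (i + 1) v =
        (∑ u ∈ N (i + 1) v, (1 / (2 * (dmax : ℝ))) * x i u) +
          ((2 * (dmax : ℝ) - ((N (i + 1) v).card : ℝ)) / (2 * (dmax : ℝ))) * x i v)
    (hzrec : ∀ i < τ, ∀ v,
      xzero (i + 1) v =
        (∑ u ∈ N (i + 1) v, (1 / (2 * (dmax : ℝ))) * xzero i u) +
          (1 / 2) * xzero i v)
    (horec : ∀ i < τ, ∀ v,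
      xone (i + 1) v =
        (∑ u ∈ N (i + 1) v, (1 / (2 * (dmax : ℝ))) * xone i u) +
          (1 / 2) * xone i v +
          ((dmax : ℝ) - ((N (i + 1) v).card : ℝ)) / (2 * (dmax : ℝ))) :
    ∀ i ≤ τ, ∀ v, xzero i v ≤ x i v ∧ x i v ≤ xone i v := by
  have hd : (0:ℝ) < 2 * (dmax : ℝ) := by positivity
  suffices h : ∀ i ≤ τ, ∀ v,
      0 ≤ xzero i v ∧ xzero i v ≤ x i v ∧ x i v ≤ xone i v ∧ xone i v ≤ 1 by
    intro i hi v
    exact ⟨(h i hi v).2.1, (h i hi v).2.2.1⟩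
  intro i
  induction i with
  | zero =>
    intro _ v
    obtain ⟨h1, h2, h3⟩ := hstart v
    obtain ⟨ha, hb⟩ := hx0 v
    rw [h1, h2, h3]
    exact ⟨ha, le_refl _, le_refl _, hb⟩
  | succ i ih =>
    intro hi v
    have hlt : i < τ := hi
    have ih' := ih (le_of_lt hlt)
    rw [hrec i hlt v, hzrec i hlt v, horec i hlt v]
    set c : ℝ := ((N (i + 1) v).card : ℝ) with hc
    have hc0 : (0:ℝ) ≤ c := Nat.cast_nonneg _
    have hcd : c ≤ (dmax : ℝ) := by rw [hc]; exact_mod_cast hN (i+1) v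
    obtain ⟨hz0, hzx, hxo, ho1⟩ := ih' v
    have hsum1 : (∑ u ∈ N (i + 1) v, (1 / (2 * (dmax : ℝ))) * xzero i u) ≤
        (∑ u ∈ N (i + 1) v, (1 / (2 * (dmax : ℝ))) * x i u) := by
      apply Finset.sum_le_sum
      intro u _
      have := (ih' u).2.1
      have h1 : (0:ℝ) ≤ 1 / (2 * (dmax : ℝ)) := by positivity
      exact mul_le_mul_of_nonneg_left this h1
    have hsum2 : (∑ u ∈ N (i + 1) v, (1 / (2 * (dmax : ℝ))) * x i u) ≤
        (∑ u ∈ N (i + 1) v, (1 / (2 * (dmax : ℝ))) * xone i u) := by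
      apply Finset.sum_le_sum
      intro u _
      have := (ih' u).2.2.1
      have h1 : (0:ℝ) ≤ 1 / (2 * (dmax : ℝ)) := by positivity
      exact mul_le_mul_of_nonneg_left this h1
    have hsumz0 : (0:ℝ) ≤ ∑ u ∈ N (i + 1) v, (1 / (2 * (dmax : ℝ))) * xzero i u := by
      apply Finset.sum_nonneg
      intro u _
      have := (ih' u).1
      positivity
    have hsumo1 : (∑ u ∈ N (i + 1) v, (1 / (2 * (dmax : ℝ))) * xone i u) ≤
        c * (1 / (2 * (dmax : ℝ))) := by
      have : (∑ u ∈ N (i + 1) v, (1 / (2 * (dmax : ℝ))) * xone i u) ≤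
          ∑ u ∈ N (i + 1) v, (1 / (2 * (dmax : ℝ))) := by
        apply Finset.sum_le_sum
        intro u _
        have h1 := (ih' u).2.2.2
        have h2 : (0:ℝ) ≤ 1 / (2 * (dmax : ℝ)) := by positivity
        nlinarith
      simpa [Finset.sum_const, mul_comm] using this
    refine ⟨?_, ?_, ?_, ?_⟩
    · have : (0:ℝ) ≤ (1/2) * xzero i v := by positivity
      linarith
    · -- xzero ≤ x
      have hx0' : 0 ≤ x i v := le_trans hz0 hzx
      have hcoef : (1:ℝ)/2 ≤ (2 * (dmax : ℝ) - c) / (2 * (dmax : ℝ)) := by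
        rw [div_le_div_iff₀ (by norm_num) hd] at *
        · nlinarith
      have : (1/2) * xzero i v ≤ ((2 * (dmax : ℝ) - c) / (2 * (dmax : ℝ))) * x i v := by
        calc (1/2) * xzero i v ≤ (1/2) * x i v := by linarith
          _ ≤ ((2 * (dmax : ℝ) - c) / (2 * (dmax : ℝ))) * x i v :=
            mul_le_mul_of_nonneg_right hcoef hx0'
      linarith
    · -- x ≤ xone
      have hx1 : x i v ≤ 1 := le_trans hxo ho1
      have hsplit : ((2 * (dmax : ℝ) - c) / (2 * (dmax : ℝ))) * x i v =
          (1/2) * x i v + (((dmax : ℝ) - c) / (2 * (dmax : ℝ))) * x i v := by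
        field_simp
        ring
      rw [hsplit]
      have hx0' : 0 ≤ x i v := le_trans hz0 hzx
      have h1 : (1/2) * x i v ≤ (1/2) * xone i v := by linarith
      have hcoef : (0:ℝ) ≤ ((dmax : ℝ) - c) / (2 * (dmax : ℝ)) := by
        apply div_nonneg (by linarith) (le_of_lt hd)
      have h2 : (((dmax : ℝ) - c) / (2 * (dmax : ℝ))) * x i v ≤
          ((dmax : ℝ) - c) / (2 * (dmax : ℝ)) := by nlinarith
      linarith
    · -- xone ≤ 1
      have h1 : (1/2) * xone i v ≤ 1/2 := by linarith
      have h2 : c * (1 / (2 * (dmax : ℝ))) + 1/2 + ((dmax : ℝ) - c) / (2 * (dmax : ℝ)) = 1 := by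
        field_simp
        ring
      linarith
end
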